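/- arXiv:1006.4560 — 2 statements merged into one kernel-verified Lean document; each statement's English description precedes it below -/
import Mathlib

section
/- Let R = k[x_1,...,x_d] be a polynomial ring over a field, m = (x_1,...,x_d), and I = (x_1^d,...,x_d^d). The normalization index s(I), the smallest integer s such that \overline{I^{n+1}} = I * \overline{I^n} for all n >= s, equals d - 1. -/
open IsLocalRing

/-- `x` is integral over the ideal `I`: it satisfies an equation of integral dependence
`x^n + a₁ x^{n-1} + ⋯ + aₙ = 0` with `aᵢ ∈ Iⁱ`. -/
def MemIntClosure {R : Type*} [CommRing R] (I : Ideal R) (x : R) : Prop :=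
  ∃ n : ℕ, 0 < n ∧ ∃ a : ℕ → R, (∀ i ∈ Finset.Icc 1 n, a i ∈ I ^ i) ∧
    x ^ n + ∑ i ∈ Finset.Icc 1 n, a i * x ^ (n - i) = 0

/-- The integral closure of an ideal `I` (as an ideal). -/
noncomputable def intCl {R : Type*} [CommRing R] (I : Ideal R) : Ideal R :=
  Ideal.span {x | MemIntClosure I x}

/-- The normalization index `s(I)`. -/
noncomputable def normIndex {R : Type*} [CommRing R] (I : Ideal R) : ℕ :=
  sInf {s | ∀ n, s ≤ n → intCl (I ^ (n + 1)) = I * intCl (I ^ n)}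

/-- The generation index `s₀(I)`. -/
noncomputable def genIndex {R : Type*} [CommRing R] (I : Ideal R) : ℕ :=
  sInf {s | 0 < s ∧ ∀ n, s < n →
    intCl (I ^ n) = ∑ i ∈ Finset.Icc 1 s, intCl (I ^ i) * intCl (I ^ (n - i))}

/-- Length of a module, as the Krull dimension of its lattice of submodules. -/
noncomputable def modLength (R M : Type*) [CommRing R] [AddCommGroup M] [Module R M] : ℕ∞ :=
  (Order.krullDim (Submodule R M)).unbotD 0

/-- Depth of a module with respect to an ideal: the supremum of lengths of
regular sequences on `M` contained in `I`. -/
noncomputable def idealDepth {R : Type*} (M : Type*) [CommRing R] [AddCommGroup M]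
    [Module R M] (I : Ideal R) : ℕ∞ :=
  sSup {n : ℕ∞ | ∃ rs : List R, (rs.length : ℕ∞) = n ∧ (∀ x ∈ rs, x ∈ I) ∧
    RingTheory.Sequence.IsRegular M rs}

/-- A ring is Cohen–Macaulay with respect to an ideal (e.g. the maximal ideal of a local
ring, or the maximal homogeneous ideal of a graded ring over a local ring) if its depth
equals its Krull dimension. -/
def IsCMRing (R : Type*) [CommRing R] (I : Ideal R) : Prop :=
  (idealDepth R I : WithBot ℕ∞) = ringKrullDim R

/-- A local ring is Cohen–Macaulay if its depth equals its dimension. -/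
def IsCMLocalRing (R : Type*) [CommRing R] [IsLocalRing R] : Prop :=
  IsCMRing R (maximalIdeal R)

/-- A local ring is analytically unramified if its completion is reduced. -/
def IsAnalyticallyUnramified (R : Type*) [CommRing R] [IsLocalRing R] : Prop :=
  IsReduced (AdicCompletion (maximalIdeal R) R)

/-- The Rees algebra `⨁ₙ Iₙ tⁿ ⊆ R[t]` of a multiplicative filtration. -/
def filtRees {R : Type*} [CommRing R] (F : ℕ → Ideal R) (h0 : F 0 = ⊤)
    (hmul : ∀ m n, F m * F n ≤ F (m + n)) : Subalgebra R (Polynomial R) where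
  carrier := {p | ∀ n, p.coeff n ∈ F n}
  add_mem' := fun {p q} hp hq n => by
    rw [Polynomial.coeff_add]; exact Ideal.add_mem _ (hp n) (hq n)
  mul_mem' := fun {p q} hp hq n => by
    rw [Polynomial.coeff_mul]
    refine Ideal.sum_mem _ fun c hc => ?_
    have h := Finset.HasAntidiagonal.mem_antidiagonal.mp hc
    exact h ▸ hmul c.1 c.2 (Ideal.mul_mem_mul (hp c.1) (hq c.2))
  algebraMap_mem' := fun r n => by
    simp only [Polynomial.algebraMap_apply, Polynomial.coeff_C]
    split
    · next h => subst h; rw [h0]; exact trivial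
    · exact Ideal.zero_mem _

/-- The maximal homogeneous ideal of a graded subalgebra of `R[t]` over a local ring `R`. -/
def maxHom {R : Type*} [CommRing R] [IsLocalRing R] (S : Subalgebra R (Polynomial R)) :
    Ideal S where
  carrier := {p | (p : Polynomial R).coeff 0 ∈ maximalIdeal R}
  add_mem' := fun {p q} hp hq => by
    show ((p + q : S) : Polynomial R).coeff 0 ∈ maximalIdeal R
    rw [Subalgebra.coe_add, Polynomial.coeff_add]
    exact Ideal.add_mem _ hp hq
  zero_mem' := by
    show ((0 : S) : Polynomial R).coeff 0 ∈ maximalIdeal R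
    simp
  smul_mem' := fun c p hp => by
    show ((c * p : S) : Polynomial R).coeff 0 ∈ maximalIdeal R
    rw [Subalgebra.coe_mul, Polynomial.mul_coeff_zero]
    exact Ideal.mul_mem_left _ _ hp

/-- The ideal `⨁ₙ I_{n+1} tⁿ` of the Rees algebra of a filtration; the quotient by it is
the associated graded ring `gr_F(R) = ⨁ₙ Iₙ/I_{n+1}`. -/
def filtGrIdeal {R : Type*} [CommRing R] (F : ℕ → Ideal R) (h0 : F 0 = ⊤)
    (hmul : ∀ m n, F m * F n ≤ F (m + n)) : Ideal (filtRees F h0 hmul) where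
  carrier := {p | ∀ n, (p : Polynomial R).coeff n ∈ F (n + 1)}
  add_mem' := fun {p q} hp hq n => by
    rw [Subalgebra.coe_add, Polynomial.coeff_add]
    exact Ideal.add_mem _ (hp n) (hq n)
  zero_mem' := fun n => by simp
  smul_mem' := fun c p hp => fun n => by
    show ((c * p : filtRees F h0 hmul) : Polynomial R).coeff n ∈ F (n + 1)
    rw [Subalgebra.coe_mul, Polynomial.coeff_mul]
    refine Ideal.sum_mem _ fun x hx => ?_
    have h : x.1 + x.2 = n := Finset.HasAntidiagonal.mem_antidiagonal.mp hx
    have : (c : Polynomial R).coeff x.1 * (p : Polynomial R).coeff x.2 ∈ F (x.1 + (x.2 + 1)) :=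
      hmul x.1 (x.2 + 1) (Ideal.mul_mem_mul (c.2 x.1) (hp x.2))
    rwa [show x.1 + (x.2 + 1) = n + 1 by omega] at this

/-- The associated graded ring of a filtration. -/
abbrev filtGr {R : Type*} [CommRing R] (F : ℕ → Ideal R) (h0 : F 0 = ⊤)
    (hmul : ∀ m n, F m * F n ≤ F (m + n)) : Type _ :=
  filtRees F h0 hmul ⧸ filtGrIdeal F h0 hmul

/-!
Write `𝔪 = (x₁, …, x_d)`. The integral closure of `Iⁿ` is `𝔪^(dn)`. A monomial `xᵉ` of
degree `dn` satisfies `(xᵉ)^d = ∏ (x_i^d)^(e_i) ∈ (Iⁿ)^d`. Conversely `𝔪^s` is integrally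
closed: under the dilation `f(x) ↦ f(t x)` into `k[x][t]` it is the contraction of `(t^s)`, a
power of the prime `t`. So the condition `\overline{I^(n+1)} = I·\overline{Iⁿ}` reads
`I·𝔪^(dn) = 𝔪^(d(n+1))`. By pigeonhole on exponents this holds once `d(d-1) < d(n+1)`, while
for `n = d - 2` the monomial `(x₁⋯x_d)^(d-1)` of `𝔪^(d(d-1))` does not even lie in `I`.
-/

namespace MemIntClosure

variable {R : Type*} [CommRing R] {I J : Ideal R} {x : R}

theorem mono (hIJ : I ≤ J) (hx : MemIntClosure I x) : MemIntClosure J x := by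
  obtain ⟨n, hn, a, ha, heq⟩ := hx
  exact ⟨n, hn, a, fun i hi => Ideal.pow_right_mono hIJ i (ha i hi), heq⟩

theorem map {S : Type*} [CommRing S] (f : R →+* S) (hx : MemIntClosure I x) :
    MemIntClosure (I.map f) (f x) := by
  obtain ⟨n, hn, a, ha, heq⟩ := hx
  refine ⟨n, hn, f ∘ a, fun i hi => ?_, by simpa using congrArg f heq⟩
  rw [← Ideal.map_pow]
  exact Ideal.mem_map_of_mem f (ha i hi)

theorem of_pow_mem_pow {c : ℕ} (hc : 0 < c) (h : x ^ c ∈ I ^ c) : MemIntClosure I x := by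
  classical
  refine ⟨c, hc, fun i => if i = c then -x ^ c else 0, fun i _ => ?_, ?_⟩
  · dsimp only
    split_ifs with hi
    · subst hi
      exact neg_mem h
    · exact zero_mem _
  · rw [Finset.sum_eq_single_of_mem c (Finset.mem_Icc.mpr ⟨hc, le_rfl⟩)
      (fun i _ hi => by simp [hi])]
    simp

end MemIntClosure

/-- If `p ^ v ∣ g` with `v < s`, every term `bᵢ g^{N-i}` of the equation is divisible by
`p ^ (v N + 1)`, hence so is `g ^ N`, and primality of `p` upgrades this to `p ^ (v + 1) ∣ g`. -/
theorem Prime.pow_dvd_of_memIntClosure {A : Type*} [CommRing A] [IsDomain A] {p : A}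
    (hp : Prime p) {s : ℕ} {g : A} (hg : MemIntClosure (Ideal.span {p ^ s}) g) : p ^ s ∣ g := by
  obtain ⟨N, -, b, hb, heq⟩ := hg
  simp only [Ideal.span_singleton_pow, Ideal.mem_span_singleton, ← pow_mul] at hb
  suffices ∀ v ≤ s, p ^ v ∣ g from this s le_rfl
  intro v
  induction v with
  | zero => simp
  | succ v ih =>
    intro hvs
    obtain ⟨h, rfl⟩ := ih (by omega)
    have hterm : ∀ i ∈ Finset.Icc 1 N, p ^ (v * N + 1) ∣ b i * (p ^ v * h) ^ (N - i) := by
      intro i hi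
      obtain ⟨hi1, hiN⟩ := Finset.mem_Icc.mp hi
      have hexp : v * N + 1 ≤ s * i + v * (N - i) := by
        have : (v + 1) * i ≤ s * i := Nat.mul_le_mul_right _ hvs
        have : v * N = v * i + v * (N - i) := by rw [← Nat.mul_add, Nat.add_sub_cancel' hiN]
        nlinarith
      refine (pow_dvd_pow p hexp).trans ?_
      rw [pow_add, pow_mul p v]
      exact mul_dvd_mul (hb i hi) (pow_dvd_pow_of_dvd (dvd_mul_right _ _) _)
    have hgN : p ^ (v * N) * p ∣ p ^ (v * N) * h ^ N := by
      rw [← pow_succ, pow_mul, ← mul_pow, eq_neg_of_add_eq_zero_left heq, dvd_neg]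
      exact Finset.dvd_sum hterm
    obtain ⟨h', rfl⟩ := hp.dvd_of_dvd_pow
      ((mul_dvd_mul_iff_left (pow_ne_zero _ hp.ne_zero)).mp hgN)
    exact ⟨h', by ring⟩

namespace MvPolynomial

open Finsupp

variable {σ R : Type*}

section Dilation

variable [CommSemiring R]

variable (σ R) in
noncomputable def dilation : MvPolynomial σ R →ₐ[R] Polynomial (MvPolynomial σ R) :=
  aeval fun i => Polynomial.X * Polynomial.C (X i)

theorem dilation_monomial (e : σ →₀ ℕ) (a : R) :
    dilation σ R (monomial e a) = Polynomial.monomial (degree e) (monomial e a) := by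
  rw [dilation, aeval_monomial, ← Polynomial.C_mul_X_pow_eq_monomial, monomial_eq]
  simp only [Finsupp.prod, mul_pow, Finset.prod_mul_distrib, Finset.prod_pow_eq_pow_sum,
    ← Polynomial.C_pow, ← map_prod, degree_apply, Polynomial.algebraMap_apply, algebraMap_eq,
    Polynomial.C_mul]
  ring

theorem coeff_dilation (f : MvPolynomial σ R) (n : ℕ) :
    (dilation σ R f).coeff n = homogeneousComponent n f := by
  classical
  ext u
  rw [coeff_homogeneousComponent]
  induction f using induction_on' with
  | monomial e a =>
    rw [dilation_monomial, Polynomial.coeff_monomial]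
    by_cases he : e = u
    · subst he
      split_ifs <;> simp_all
    · split_ifs <;> simp [coeff_monomial, he]
  | add p q hp hq =>
    simp only [map_add, Polynomial.coeff_add, coeff_add, hp, hq, ite_add_ite, add_zero]

theorem X_pow_dvd_dilation_iff {f : MvPolynomial σ R} {s : ℕ} :
    Polynomial.X ^ s ∣ dilation σ R f ↔ f ∈ idealOfVars σ R ^ s := by
  simp only [Polynomial.X_pow_dvd_iff, coeff_dilation, mem_pow_idealOfVars_iff',
    MvPolynomial.ext_iff, coeff_homogeneousComponent, coeff_zero]
  exact ⟨fun h u hu => by simpa using h _ hu u, fun h n hn u => by grind⟩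

end Dilation

section CommRing

variable [CommRing R]

theorem intCl_le_pow_idealOfVars [IsDomain R] {K : Ideal (MvPolynomial σ R)} {s : ℕ}
    (hK : K ≤ idealOfVars σ R ^ s) : intCl K ≤ idealOfVars σ R ^ s := by
  have hmap : (idealOfVars σ R ^ s).map (dilation σ R) ≤ Ideal.span {Polynomial.X ^ s} :=
    Ideal.map_le_iff_le_comap.mpr fun f hf =>
      Ideal.mem_span_singleton.mpr (X_pow_dvd_dilation_iff.mpr hf)
  rw [intCl, Ideal.span_le]
  intro f hf
  exact X_pow_dvd_dilation_iff.mp <| Polynomial.prime_X.pow_dvd_of_memIntClosure <|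
    ((hf.mono hK).map (dilation σ R).toRingHom).mono hmap

theorem map_expand_idealOfVars (c : ℕ) :
    (idealOfVars σ R).map (expand c) = Ideal.span (Set.range fun i => X i ^ c) := by
  rw [Ideal.map_span, ← Set.range_comp]
  simp only [Function.comp_def, expand_X]

/-- `(x^e)^c = expand c (x^e)`, and `expand c` carries `𝔪 ^ (c n)` into `(x₁^c, …)^(c n)`. -/
theorem pow_idealOfVars_le_intCl {c : ℕ} (hc : 0 < c) (n : ℕ) :
    idealOfVars σ R ^ (c * n) ≤ intCl (Ideal.span (Set.range fun i => X i ^ c) ^ n) := by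
  rw [pow_idealOfVars_eq_span, Ideal.span_le]
  rintro _ ⟨e, he, rfl⟩
  have hmem : monomial e (1 : R) ∈ idealOfVars σ R ^ (c * n) := by
    rw [pow_idealOfVars_eq_span]
    exact Ideal.subset_span (Set.mem_image_of_mem _ he)
  apply Ideal.subset_span
  apply MemIntClosure.of_pow_mem_pow hc
  rw [← pow_mul, mul_comm n c, ← map_expand_idealOfVars, ← Ideal.map_pow, monomial_pow, one_pow,
    ← expand_monomial]
  exact Ideal.mem_map_of_mem _ hmem

theorem span_X_pow_le_pow_idealOfVars (c : ℕ) :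
    Ideal.span (Set.range fun i => X i ^ c) ≤ idealOfVars σ R ^ c := by
  rw [Ideal.span_le]
  rintro _ ⟨i, rfl⟩
  exact Ideal.pow_mem_pow (Ideal.subset_span (Set.mem_range_self i)) c

theorem intCl_span_X_pow_pow [IsDomain R] {c : ℕ} (hc : 0 < c) (n : ℕ) :
    intCl (Ideal.span (Set.range fun i => X i ^ c) ^ n) = idealOfVars σ R ^ (c * n) := by
  refine le_antisymm (intCl_le_pow_idealOfVars ?_) (pow_idealOfVars_le_intCl hc n)
  rw [pow_mul]
  exact Ideal.pow_right_mono (span_X_pow_le_pow_idealOfVars c) n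

/-- Pigeonhole: a monomial of degree `s + c > card σ * (c - 1)` has some exponent `≥ c`. -/
theorem span_X_pow_mul_pow_idealOfVars [Fintype σ] {c s : ℕ}
    (h : Fintype.card σ * (c - 1) < s + c) :
    Ideal.span (Set.range fun i => X i ^ c) * idealOfVars σ R ^ s = idealOfVars σ R ^ (s + c) := by
  refine le_antisymm ?_ ?_
  · rw [add_comm, pow_add]
    exact Ideal.mul_mono_left (span_X_pow_le_pow_idealOfVars c)
  rw [pow_idealOfVars_eq_span, Ideal.span_le]
  rintro _ ⟨u, hu, rfl⟩
  obtain ⟨i, hi⟩ : ∃ i, c ≤ u i := by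
    by_contra! hlt
    have : degree u ≤ Fintype.card σ * (c - 1) := by
      rw [degree_eq_sum, ← smul_eq_mul, ← Finset.card_univ, ← Finset.sum_const]
      exact Finset.sum_le_sum fun i _ => Nat.le_sub_one_of_lt (hlt i)
    simp only [Set.mem_preimage, Set.mem_singleton_iff] at hu
    omega
  obtain ⟨v, rfl⟩ := le_iff_exists_add.mp (single_le_iff.mpr hi)
  have hv : degree v = s := by
    simp only [Set.mem_preimage, Set.mem_singleton_iff, map_add, degree_single] at hu
    omega
  have hmem : monomial v (1 : R) ∈ idealOfVars σ R ^ s := by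
    rw [pow_idealOfVars_eq_span]
    exact Ideal.subset_span (Set.mem_image_of_mem _ hv)
  show monomial (single i c + v) (1 : R) ∈ _
  rw [← one_mul (1 : R), ← monomial_mul, ← X_pow_eq_monomial]
  exact Ideal.mul_mem_mul (Ideal.subset_span ⟨i, rfl⟩) hmem

theorem monomial_one_notMem_span_X_pow [Nontrivial R] {c : ℕ} {u : σ →₀ ℕ} (hu : ∀ i, u i < c) :
    monomial u (1 : R) ∉ Ideal.span (Set.range fun i => X i ^ c) := by
  classical
  have : (Set.range fun i => (X i : MvPolynomial σ R) ^ c) =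
      (monomial · 1) '' Set.range fun i => single i c := by
    rw [← Set.range_comp]
    simp only [Function.comp_def, X_pow_eq_monomial]
  rw [this, mem_ideal_span_monomial_image]
  intro h
  obtain ⟨_, ⟨i, rfl⟩, hle⟩ := h u (by simp [support_monomial])
  exact (hu i).not_ge (single_le_iff.mp hle)

end CommRing

end MvPolynomial

open MvPolynomial

/-- For `R = k[x₁,…,x_d]` and `I = (x₁^d,…,x_d^d)`, the normalization index `s(I)`,
the smallest `s` with `\overline{I^{n+1}} = I·\overline{I^n}` for all `n ≥ s`,
equals `d - 1`. -/
theorem statement1 (k : Type*) [Field k] (d : ℕ) (hd : 0 < d)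
    (I : Ideal (MvPolynomial (Fin d) k))
    (hI : I = Ideal.span (Set.range fun i : Fin d => MvPolynomial.X i ^ d)) :
    normIndex I = d - 1 := by
  unfold normIndex
  set S : Set ℕ := {s | ∀ n, s ≤ n → intCl (I ^ (n + 1)) = I * intCl (I ^ n)}
  have hstable : d - 1 ∈ S := by
    intro n hn
    have hcard : Fintype.card (Fin d) * (d - 1) < d * n + d := by
      rw [Fintype.card_fin]
      nlinarith
    rw [hI, intCl_span_X_pow_pow hd, intCl_span_X_pow_pow hd,
      span_X_pow_mul_pow_idealOfVars hcard, mul_add_one]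
  have hminimal : ∀ s ∈ S, d - 1 ≤ s := by
    intro s hs
    by_contra! hlt
    let ν : Fin d →₀ ℕ := Finsupp.equivFunOnFinite.symm fun _ => d - 1
    have hν : monomial ν (1 : k) ∈ intCl (I ^ (d - 1)) := by
      rw [hI]
      refine pow_idealOfVars_le_intCl hd _
        ((monomial_mem_pow_idealOfVars_iff _ _ one_ne_zero).mpr ?_)
      simp [ν, Finsupp.degree_eq_sum]
    rw [show d - 1 = d - 2 + 1 by omega, hs (d - 2) (by omega), hI] at hν
    have hνd : ∀ i, ν i < d := fun _ => by simp [ν]; omega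
    exact monomial_one_notMem_span_X_pow hνd (Ideal.mul_le_left hν)
  exact le_antisymm (Nat.sInf_le hstable) (le_csInf ⟨_, hstable⟩ hminimal)
end

section
/- Let R = k[x_1,...,x_6] and I = (x_1x_2x_5, x_1x_3x_4, x_2x_3x_6, x_4x_5x_6). Then the monomial x_1x_2x_3x_4x_5x_6 lies in the integral closure of I^2 but not in I^2; in particular I is not normal. -/
/-!
Every vertex `xᵢ` lies in exactly two of the four edges, so
`M² = x₁x₂x₅ · x₁x₃x₄ · x₂x₃x₆ · x₄x₅x₆` lies in `(I²)²`, which is an equation of integral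
dependence of `M` over `I²`.
On the other hand `I²` is spanned by the products of two edge monomials. Any two edges meet, so
each such product contains a squared variable and does not divide the squarefree monomial `M`.
-/

open IsLocalRing

open MvPolynomial

namespace Finsupp

variable {σ : Type*}

theorem finsetSum_single_one_apply [DecidableEq σ] (s : Finset σ) (j : σ) :
    (∑ i ∈ s, single i 1 : σ →₀ ℕ) j = if j ∈ s then 1 else 0 := by
  simp [finsetSum_apply, single_apply]

theorem finsetSum_single_one_add_le_iff (s t u : Finset σ) :
    (∑ i ∈ s, single i 1 : σ →₀ ℕ) + ∑ i ∈ t, single i 1 ≤ ∑ i ∈ u, single i 1 ↔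
      Disjoint s t ∧ s ⊆ u ∧ t ⊆ u := by
  classical
  simp only [le_def, add_apply, finsetSum_single_one_apply, Finset.disjoint_left,
    Finset.subset_iff]
  constructor
  · intro h
    refine ⟨fun j _ _ => ?_, fun j _ => ?_, fun j _ => ?_⟩ <;> specialize h j <;>
      split_ifs at h <;> simp_all
  · rintro ⟨hst, hsu, htu⟩ j
    split_ifs <;> simp_all

end Finsupp

theorem memIntClosure_of_pow_mem {R : Type*} [CommRing R] {I : Ideal R} {x : R} {n : ℕ}
    (hn : 0 < n) (hx : x ^ n ∈ I ^ n) : MemIntClosure I x := by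
  refine ⟨n, hn, fun i => if n = i then -x ^ n else 0, fun i _ => ?_, ?_⟩
  · dsimp only
    split_ifs with h
    · exact h ▸ neg_mem hx
    · exact zero_mem _
  · simp [Finset.sum_ite_eq, Nat.one_le_iff_ne_zero.mpr hn.ne']

namespace MvPolynomial

variable {σ : Type*} (R : Type*) [CommSemiring R]

noncomputable def edgeIdeal (𝓔 : Set (Finset σ)) : Ideal (MvPolynomial σ R) :=
  Ideal.span ((fun e => ∏ i ∈ e, X i) '' 𝓔)

variable {R}

theorem prod_X_eq_monomial (s : Finset σ) :
    ∏ i ∈ s, (X i : MvPolynomial σ R) = monomial (∑ i ∈ s, Finsupp.single i 1) 1 :=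
  (monomial_sum_one s _).symm

theorem edgeIdeal_sq (𝓔 : Set (Finset σ)) :
    edgeIdeal R 𝓔 ^ 2 = Ideal.span ((fun d => monomial d (1 : R)) ''
      Set.image2 (fun e f => ∑ i ∈ e, Finsupp.single i 1 + ∑ i ∈ f, Finsupp.single i 1)
        𝓔 𝓔) := by
  rw [edgeIdeal, sq, Ideal.span_mul_span', ← Set.image2_mul, Set.image2_image_left,
    Set.image2_image_right, Set.image_image2]
  simp only [prod_X_eq_monomial, monomial_mul, mul_one]

theorem prod_X_mem_edgeIdeal_sq_iff [Nontrivial R] (𝓔 : Set (Finset σ)) (u : Finset σ) :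
    ∏ i ∈ u, (X i : MvPolynomial σ R) ∈ edgeIdeal R 𝓔 ^ 2 ↔
      ∃ e ∈ 𝓔, ∃ f ∈ 𝓔, Disjoint e f ∧ e ⊆ u ∧ f ⊆ u := by
  classical
  rw [edgeIdeal_sq, mem_ideal_span_monomial_image, prod_X_eq_monomial, support_monomial,
    if_neg one_ne_zero]
  simp [Finsupp.finsetSum_single_one_add_le_iff]

end MvPolynomial

/-- For `R = k[x₁,…,x₆]` and `I = (x₁x₂x₅, x₁x₃x₄, x₂x₃x₆, x₄x₅x₆)`, the monomial
`x₁x₂x₃x₄x₅x₆` lies in the integral closure of `I²` but not in `I²`; in particular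
`I` is not normal. -/
theorem statement18 (k : Type*) [Field k]
    (I : Ideal (MvPolynomial (Fin 6) k))
    (hI : I = Ideal.span {X 0 * X 1 * X 4, X 0 * X 2 * X 3, X 1 * X 2 * X 5,
      X 3 * X 4 * X 5})
    (M : MvPolynomial (Fin 6) k) (hM : M = X 0 * X 1 * X 2 * X 3 * X 4 * X 5) :
    MemIntClosure (I ^ 2) M ∧ M ∉ I ^ 2 ∧ ¬ (∀ n : ℕ, intCl (I ^ n) = I ^ n) := by
  let 𝓔 : Set (Finset (Fin 6)) := {{0, 1, 4}, {0, 2, 3}, {1, 2, 5}, {3, 4, 5}}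
  have h𝓔 : 𝓔.Intersecting := by
    simp only [𝓔, Set.Intersecting, Set.mem_insert_iff, Set.mem_singleton_iff,
      forall_eq_or_imp, forall_eq]
    decide
  have hI𝓔 : I = edgeIdeal k 𝓔 := by
    simp [hI, edgeIdeal, 𝓔, Set.image_insert_eq, mul_assoc]
  have hM_mem : MemIntClosure (I ^ 2) M := by
    have hM_sq : M ^ 2 = X 0 * X 1 * X 4 * (X 0 * X 2 * X 3) *
        (X 1 * X 2 * X 5 * (X 3 * X 4 * X 5)) := by
      rw [hM]; ring
    refine memIntClosure_of_pow_mem two_pos ?_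
    rw [hM_sq, sq (I ^ 2), sq I, hI]
    refine Ideal.mul_mem_mul (Ideal.mul_mem_mul ?_ ?_) (Ideal.mul_mem_mul ?_ ?_) <;>
      exact Ideal.subset_span (by simp)
  have hM_not_mem : M ∉ I ^ 2 := by
    have hM_prod : M = ∏ i, X i := by simp [hM, Fin.prod_univ_six]
    rw [hI𝓔, hM_prod, prod_X_mem_edgeIdeal_sq_iff]
    rintro ⟨e, he, f, hf, hef, -⟩
    exact h𝓔 he hf hef
  exact ⟨hM_mem, hM_not_mem, fun h => hM_not_mem (h 2 ▸ Ideal.subset_span hM_mem)⟩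
end
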